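/- Let T be the operator Tf(x) = x f(α(x)) where α is the Gauss map, and let m be the Gauss measure. Then for every p > 1, every n ∈ ℕ, and every f ∈ L^p((0,1), m), one has ∫_0^1 |T^n f(x)|^p dm(x) ≤ g^{(n−1)p} ∫_0^1 |f(x)|^p dm(x), where g = (√5 − 1)/2 < 1. -/

import Mathlib

open MeasureTheory Set

/-- The Gauss measure. -/
noncomputable def gaussMeasure : Measure ℝ :=
  (volume.withDensity (fun x => ENNReal.ofReal (1 / (Real.log 2 * (1 + x))))).restrict (Ioo 0 1)

/-- The operator `Tf(x) = x f(α(x))` with `α` the Gauss map. -/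
noncomputable def Tgauss (f : ℝ → ℝ) : ℝ → ℝ := fun x => x * f (Int.fract x⁻¹)

/-!
Iterating, `Tⁿf(x) = x α(x) ⋯ αⁿ⁻¹(x) · f(αⁿ(x))`. The Gauss map `α` preserves `m`: on the
branch `1/(k+2) < x ≤ 1/(k+1)` it inverts `y ↦ 1/(y+k+1)`, and the contributions of the
branches to the pulled-back density telescope to `1/(log 2 (1+y))`. So it suffices to bound the
product pointwise by `gⁿ⁻¹`, where `g = φ⁻¹` and `g² = 1 - g`. Every `y ≤ 1` satisfies
`y α(y) ≤ 1 - y`: so along an orbit each factor is either `≤ g`, or it is `> g` and its product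
with the next factor is `< 1 - g = g²`.
-/

open Filter Topology Function
open scoped ENNReal goldenRatio

noncomputable section

def gaussMap (x : ℝ) : ℝ := Int.fract x⁻¹

def gaussDensity (x : ℝ) : ℝ≥0∞ := ENNReal.ofReal (1 / (Real.log 2 * (1 + x)))

/-- The inverse of the `k`-th branch `x ↦ x⁻¹ - (k + 1)` of the Gauss map. -/
def gaussBranch (k : ℕ) (y : ℝ) : ℝ := (y + (k + 1))⁻¹

lemma measurable_gaussMap : Measurable gaussMap := measurable_inv.fract

@[fun_prop]
lemma measurable_gaussDensity : Measurable gaussDensity := by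
  unfold gaussDensity; fun_prop

lemma lintegral_gaussMeasure {G : ℝ → ℝ≥0∞} (hG : Measurable G) :
    ∫⁻ x, G x ∂gaussMeasure = ∫⁻ x in Ioo 0 1, gaussDensity x * G x :=
  setLIntegral_withDensity_eq_setLIntegral_mul volume measurable_gaussDensity hG measurableSet_Ioo

lemma ae_gaussMeasure_mem_Ioo : ∀ᵐ x ∂gaussMeasure, x ∈ Ioo (0 : ℝ) 1 :=
  ae_restrict_mem measurableSet_Ioo

lemma floor_inv_gaussBranch {y : ℝ} (hy : y ∈ Ico (0 : ℝ) 1) (k : ℕ) :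
    ⌊(gaussBranch k y)⁻¹⌋ = k + 1 := by
  rw [gaussBranch, inv_inv, Int.floor_eq_iff]
  push_cast
  constructor <;> linarith [hy.1, hy.2]

lemma gaussMap_gaussBranch {y : ℝ} (hy : y ∈ Ico (0 : ℝ) 1) (k : ℕ) :
    gaussMap (gaussBranch k y) = y := by
  rw [gaussMap, Int.fract, floor_inv_gaussBranch hy, gaussBranch, inv_inv]
  push_cast
  ring

lemma injOn_gaussBranch (k : ℕ) : InjOn (gaussBranch k) (Ico 0 1) :=
  LeftInvOn.injOn fun _ hy => gaussMap_gaussBranch hy k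

lemma measurableSet_image_gaussBranch (k : ℕ) : MeasurableSet (gaussBranch k '' Ico 0 1) := by
  refine measurableSet_Ico.image_of_continuousOn_injOn ?_ (injOn_gaussBranch k)
  refine ContinuousOn.inv₀ (by fun_prop) fun y hy => ?_
  linarith [hy.1, k.cast_nonneg (α := ℝ)]

lemma pairwise_disjoint_image_gaussBranch :
    Pairwise (Disjoint on fun k : ℕ => gaussBranch k '' Ico 0 1) := by
  intro i j hij
  refine disjoint_left.2 ?_
  rintro _ ⟨y, hy, rfl⟩ ⟨z, hz, hzy⟩
  have h := floor_inv_gaussBranch hz j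
  rw [hzy, floor_inv_gaussBranch hy i] at h
  omega

lemma iUnion_image_gaussBranch : ⋃ k : ℕ, gaussBranch k '' Ico 0 1 = Ioc 0 1 := by
  ext x
  simp only [mem_iUnion, mem_image]
  constructor
  · rintro ⟨k, y, hy, rfl⟩
    have h1 : 1 ≤ y + (k + 1) := by linarith [hy.1, k.cast_nonneg (α := ℝ)]
    exact ⟨inv_pos.2 (by linarith), inv_le_one_of_one_le₀ h1⟩
  · rintro ⟨hx0, hx1⟩
    have h1 : (1 : ℤ) ≤ ⌊x⁻¹⌋ := Int.le_floor.2 (by exact_mod_cast (one_le_inv₀ hx0).2 hx1)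
    obtain ⟨k, hk⟩ : ∃ k : ℕ, ⌊x⁻¹⌋ = k + 1 := ⟨(⌊x⁻¹⌋ - 1).toNat, by omega⟩
    refine ⟨k, Int.fract x⁻¹, ⟨Int.fract_nonneg _, Int.fract_lt_one _⟩, ?_⟩
    rw [gaussBranch, Int.fract, hk]
    push_cast
    rw [sub_add_cancel, inv_inv]

lemma hasDerivAt_gaussBranch (k : ℕ) {y : ℝ} (hy : 0 ≤ y) :
    HasDerivAt (gaussBranch k) (-1 / (y + (k + 1)) ^ 2) y :=
  ((hasDerivAt_id y).add_const _).inv (by positivity)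

lemma hasSum_sub_succ_of_antitone {a : ℕ → ℝ} (ha : Antitone a) (h : Tendsto a atTop (𝓝 0)) :
    HasSum (fun k => a k - a (k + 1)) (a 0) := by
  rw [hasSum_iff_tendsto_nat_of_nonneg fun k => sub_nonneg.2 (ha k.le_succ)]
  simp_rw [Finset.sum_range_sub']
  simpa using h.const_sub (a 0)

/-- The Gauss density is a fixed point of the transfer operator of the Gauss map. -/
lemma tsum_abs_deriv_mul_gaussDensity_gaussBranch {y : ℝ} (hy : 0 ≤ y) :
    ∑' k : ℕ, ENNReal.ofReal |-1 / (y + (k + 1)) ^ 2| * gaussDensity (gaussBranch k y) =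
      gaussDensity y := by
  set a : ℕ → ℝ := fun k => (Real.log 2)⁻¹ * (y + (k + 1))⁻¹
  have ha : Antitone a := fun i j hij => by
    have : (i : ℝ) ≤ j := by exact_mod_cast hij
    dsimp only [a]; gcongr
  have hlim : Tendsto a atTop (𝓝 0) := by
    simpa using (tendsto_inv_atTop_zero.comp (tendsto_atTop_add_const_left _ y
      (tendsto_atTop_add_const_right _ 1 tendsto_natCast_atTop_atTop))).const_mul (Real.log 2)⁻¹
  have hterm (k : ℕ) : ENNReal.ofReal |-1 / (y + (k + 1)) ^ 2| * gaussDensity (gaussBranch k y) =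
      ENNReal.ofReal (a k - a (k + 1)) := by
    have hk : 0 < y + (k + 1) := by positivity
    rw [gaussDensity, gaussBranch, ← ENNReal.ofReal_mul (abs_nonneg _)]
    congr 1
    rw [abs_div, abs_neg, abs_one, abs_of_pos (by positivity)]
    dsimp only [a]
    push_cast
    field_simp
    ring
  simp_rw [hterm]
  rw [← ENNReal.ofReal_tsum_of_nonneg (fun k => sub_nonneg.2 (ha k.le_succ))
    (hasSum_sub_succ_of_antitone ha hlim).summable, (hasSum_sub_succ_of_antitone ha hlim).tsum_eq]
  simp only [a, gaussDensity]
  congr 1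
  push_cast
  field_simp
  ring

lemma setLIntegral_image_gaussBranch (H : ℝ → ℝ≥0∞) (k : ℕ) :
    ∫⁻ x in gaussBranch k '' Ico 0 1, gaussDensity x * H (gaussMap x) =
      ∫⁻ y in Ico 0 1,
        ENNReal.ofReal |-1 / (y + (k + 1)) ^ 2| * gaussDensity (gaussBranch k y) * H y := by
  rw [lintegral_image_eq_lintegral_abs_deriv_mul measurableSet_Ico
    (fun y hy => (hasDerivAt_gaussBranch k hy.1).hasDerivWithinAt) (injOn_gaussBranch k)]
  refine setLIntegral_congr_fun measurableSet_Ico fun y hy => ?_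
  rw [gaussMap_gaussBranch hy, mul_assoc]

lemma lintegral_comp_gaussMap {H : ℝ → ℝ≥0∞} (hH : Measurable H) :
    ∫⁻ x, H (gaussMap x) ∂gaussMeasure = ∫⁻ x, H x ∂gaussMeasure := by
  rw [lintegral_gaussMeasure (G := fun x => H (gaussMap x)) (hH.comp measurable_gaussMap),
    lintegral_gaussMeasure hH,
    setLIntegral_congr Ioo_ae_eq_Ioc, setLIntegral_congr Ioo_ae_eq_Ico,
    ← iUnion_image_gaussBranch,
    lintegral_iUnion measurableSet_image_gaussBranch pairwise_disjoint_image_gaussBranch]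
  simp_rw [setLIntegral_image_gaussBranch]
  have hmeas (k : ℕ) : AEMeasurable (fun y : ℝ =>
      ENNReal.ofReal |-1 / (y + (k + 1)) ^ 2| * gaussDensity (gaussBranch k y) * H y)
      (volume.restrict (Ico 0 1)) := by
    unfold gaussBranch; fun_prop
  rw [← lintegral_tsum hmeas]
  refine setLIntegral_congr_fun measurableSet_Ico fun y hy => ?_
  rw [ENNReal.tsum_mul_right, tsum_abs_deriv_mul_gaussDensity_gaussBranch hy.1]

theorem measurePreserving_gaussMap : MeasurePreserving gaussMap gaussMeasure gaussMeasure :=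
  ⟨measurable_gaussMap, Measure.ext_of_lintegral _ fun H hH => by
    rw [lintegral_map hH measurable_gaussMap, lintegral_comp_gaussMap hH]⟩

lemma inv_goldenRatio_sq : φ⁻¹ ^ 2 = 1 - φ⁻¹ := by
  rw [Real.inv_goldenRatio, neg_sq, Real.goldenConj_sq]
  ring

lemma prod_range_succ_le_inv_goldenRatio_pow {u : ℕ → ℝ} (h0 : ∀ k, 0 ≤ u k)
    (hu : ∀ k, u k * u (k + 1) ≤ 1 - u k) (n : ℕ) :
    ∏ k ∈ Finset.range (n + 1), u k ≤ φ⁻¹ ^ n := by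
  induction n using Nat.strong_induction_on generalizing u with
  | _ n ih =>
  have hg : 0 < φ⁻¹ := inv_pos.2 Real.goldenRatio_pos
  have hg1 : φ⁻¹ < 1 := inv_lt_one_of_one_lt₀ Real.one_lt_goldenRatio
  have hle1 (k : ℕ) : u k ≤ 1 := by nlinarith [h0 k, h0 (k + 1), hu k]
  have hshift (j : ℕ) : ∀ m < n, ∏ k ∈ Finset.range (m + 1), u (k + j) ≤ φ⁻¹ ^ m :=
    fun m hm => ih m hm (fun k => h0 _) fun k => by simpa [add_right_comm] using hu (k + j)
  rcases n with _ | n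
  · simpa using hle1 0
  by_cases hsmall : u 0 ≤ φ⁻¹
  · rw [Finset.prod_range_succ', pow_succ]
    exact mul_le_mul (hshift 1 n n.lt_succ_self) hsmall (h0 0) (by positivity)
  -- a factor `> φ⁻¹` is paired with the next one: `u 0 * u 1 ≤ 1 - u 0 < 1 - φ⁻¹ = φ⁻¹ ^ 2`
  have hpair : u 1 * u 0 ≤ φ⁻¹ ^ 2 := by
    rw [inv_goldenRatio_sq]; linarith [hu 0]
  rcases n with _ | n
  · simp only [zero_add, Finset.prod_range_succ, Finset.range_one, Finset.prod_singleton, pow_one]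
    nlinarith
  · calc ∏ k ∈ Finset.range (n + 3), u k
          = (∏ k ∈ Finset.range (n + 1), u (k + 2)) * (u 1 * u 0) := by
            rw [Finset.prod_range_succ', Finset.prod_range_succ', mul_assoc]
      _ ≤ φ⁻¹ ^ n * φ⁻¹ ^ 2 :=
            mul_le_mul (hshift 2 n (by omega)) hpair (mul_nonneg (h0 1) (h0 0)) (by positivity)
      _ = φ⁻¹ ^ (n + 2) := (pow_add _ _ _).symm

lemma prod_range_le_inv_goldenRatio_rpow {u : ℕ → ℝ} (h0 : ∀ k, 0 ≤ u k)
    (hu : ∀ k, u k * u (k + 1) ≤ 1 - u k) (n : ℕ) :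
    ∏ k ∈ Finset.range n, u k ≤ φ⁻¹ ^ ((n : ℝ) - 1) := by
  rcases n with _ | n
  · simpa [Real.rpow_neg_one] using Real.one_lt_goldenRatio.le
  · simpa [Real.rpow_natCast] using prod_range_succ_le_inv_goldenRatio_pow h0 hu n

lemma mul_gaussMap_le_one_sub {x : ℝ} (hx : x ≤ 1) : x * gaussMap x ≤ 1 - x := by
  rcases le_or_gt x 0 with hx0 | hx0
  · exact (mul_nonpos_of_nonpos_of_nonneg hx0 (Int.fract_nonneg x⁻¹)).trans (by linarith)
  have h1 : (1 : ℝ) ≤ ⌊x⁻¹⌋ := by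
    exact_mod_cast Int.le_floor.2 (by exact_mod_cast (one_le_inv₀ hx0).2 hx)
  rw [gaussMap, Int.fract, mul_sub, mul_inv_cancel₀ hx0.ne']
  nlinarith

lemma gaussMap_iterate_mem_Icc {x : ℝ} (hx : x ∈ Icc (0 : ℝ) 1) (k : ℕ) :
    gaussMap^[k] x ∈ Icc (0 : ℝ) 1 := by
  rcases k with _ | k
  · exact hx
  · rw [iterate_succ_apply']
    exact ⟨Int.fract_nonneg _, (Int.fract_lt_one _).le⟩

lemma prod_gaussMap_iterate_le {x : ℝ} (hx : x ∈ Icc (0 : ℝ) 1) (n : ℕ) :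
    ∏ k ∈ Finset.range n, gaussMap^[k] x ≤ φ⁻¹ ^ ((n : ℝ) - 1) :=
  prod_range_le_inv_goldenRatio_rpow (fun k => (gaussMap_iterate_mem_Icc hx k).1)
    (fun k => by
      rw [iterate_succ_apply']
      exact mul_gaussMap_le_one_sub (gaussMap_iterate_mem_Icc hx k).2) n

lemma Tgauss_iterate_apply (f : ℝ → ℝ) (n : ℕ) (x : ℝ) :
    Tgauss^[n] f x = (∏ k ∈ Finset.range n, gaussMap^[k] x) * f (gaussMap^[n] x) := by
  induction n generalizing x with
  | zero => simp
  | succ n ih =>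
    rw [iterate_succ_apply', Finset.prod_range_succ']
    change x * Tgauss^[n] f (gaussMap x) = _
    rw [ih]
    simp only [iterate_succ_apply, iterate_zero_apply]
    ring

lemma abs_Tgauss_iterate_le (f : ℝ → ℝ) (n : ℕ) {x : ℝ} (hx : x ∈ Icc (0 : ℝ) 1) :
    |Tgauss^[n] f x| ≤ φ⁻¹ ^ ((n : ℝ) - 1) * |f (gaussMap^[n] x)| := by
  rw [Tgauss_iterate_apply, abs_mul,
    abs_of_nonneg (Finset.prod_nonneg fun k _ => (gaussMap_iterate_mem_Icc hx k).1)]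
  gcongr
  exact prod_gaussMap_iterate_le hx n

end

theorem Top_iterate_Lp_bound (p : ℝ) (hp : 1 < p) (n : ℕ) (f : ℝ → ℝ)
    (hf : MemLp f (ENNReal.ofReal p) gaussMeasure) :
    (∫⁻ x, ENNReal.ofReal (|Tgauss^[n] f x| ^ p) ∂gaussMeasure) ≤
      ENNReal.ofReal (((Real.sqrt 5 - 1) / 2) ^ (((n : ℝ) - 1) * p)) *
        ∫⁻ x, ENNReal.ofReal (|f x| ^ p) ∂gaussMeasure := by
  have hp0 : 0 ≤ p := by linarith
  have hg : (Real.sqrt 5 - 1) / 2 = φ⁻¹ := by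
    rw [Real.inv_goldenRatio]
    ring
  have hpointwise : ∀ᵐ x ∂gaussMeasure, ENNReal.ofReal (|Tgauss^[n] f x| ^ p) ≤
      ENNReal.ofReal (φ⁻¹ ^ (((n : ℝ) - 1) * p)) *
        ENNReal.ofReal (|f (gaussMap^[n] x)| ^ p) := by
    filter_upwards [ae_gaussMeasure_mem_Ioo] with x hx
    rw [← ENNReal.ofReal_mul (by positivity), Real.rpow_mul (by positivity),
      ← Real.mul_rpow (by positivity) (abs_nonneg _)]
    exact ENNReal.ofReal_le_ofReal <| Real.rpow_le_rpow (abs_nonneg _)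
      (abs_Tgauss_iterate_le f n (Ioo_subset_Icc_self hx)) hp0
  have hpres := measurePreserving_gaussMap.iterate n
  have hfp : AEMeasurable (fun x => ENNReal.ofReal (|f x| ^ p)) (gaussMeasure.map gaussMap^[n]) :=
    hpres.map_eq ▸ hf.1.aemeasurable.abs.pow_const p |>.ennreal_ofReal
  calc _ ≤ ∫⁻ x, ENNReal.ofReal (φ⁻¹ ^ (((n : ℝ) - 1) * p)) *
          ENNReal.ofReal (|f (gaussMap^[n] x)| ^ p) ∂gaussMeasure := lintegral_mono_ae hpointwise
    _ = _ := by
      rw [lintegral_const_mul' _ _ ENNReal.ofReal_ne_top, ← lintegral_map' hfp hpres.aemeasurable,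
        hpres.map_eq, hg]
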